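/- Suppose (Poly-R₁) holds. Then for any a>0 there exists δ=δ(a)>0 such that σ(t,u)/σ(t,s) ≥ 2^{−δ}(s/u)^{δ} for all t>0 and all 0<u≤s≤tφ′(a). Moreover, if (Poly-∞) holds, then the same inequality holds for all t>0 and all 0<u≤s<tφ′(0+). -/

import Mathlib

open MeasureTheory Real Set
open scoped ENNReal

/-- Tail of the Lévy measure: `w(r) = ν((r,∞))`. -/
noncomputable def levyTail (ν : Measure ℝ) (r : ℝ) : ℝ := (ν (Set.Ioi r)).toReal

/-- Laplace exponent `φ(λ) = ∫ (1 - e^{-λ s}) ν(ds)`. -/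
noncomputable def laplaceExp (ν : Measure ℝ) (lam : ℝ) : ℝ :=
  ∫ s, (1 - Real.exp (-(lam * s))) ∂ν

/-- Condition (Poly-R₁); (Poly-∞) is the case `R₁ = ⊤`. -/
def PolyCond (ν : Measure ℝ) (R₁ : ℝ≥0∞) (c c' β₁ β₂ : ℝ) : Prop :=
  ∀ r R : ℝ, 0 < r → r ≤ R → ENNReal.ofReal R < R₁ →
    c * (R / r) ^ β₁ ≤ levyTail ν r / levyTail ν R ∧
      levyTail ν r / levyTail ν R ≤ c' * (R / r) ^ β₂

/-- `ν` is the Lévy measure of a driftless subordinator. -/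
structure IsLevyMeasure (ν : Measure ℝ) : Prop where
  supp : ν (Set.Iic 0) = 0
  tail_fin : ∀ r : ℝ, 0 < r → ν (Set.Ioi r) < ⊤
  integ : IntegrableOn (fun s => s) (Set.Ioc (0:ℝ) 1) ν

/-- `μ t` is the law of `S_t` for the driftless subordinator with Lévy measure `ν`. -/
structure IsSubordinatorLaw (ν : Measure ℝ) (μ : ℝ → Measure ℝ) : Prop where
  levy : IsLevyMeasure ν
  prob : ∀ t : ℝ, 0 < t → IsProbabilityMeasure (μ t)
  nonneg : ∀ t : ℝ, 0 < t → μ t (Set.Iio 0) = 0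
  laplace : ∀ t lam : ℝ, 0 < t → 0 ≤ lam →
    (∫ s, Real.exp (-(lam * s)) ∂(μ t)) = Real.exp (-(t * laplaceExp ν lam))

/-- `H(λ) = φ(λ) - λ φ'(λ)`. -/
noncomputable def Hfun (ν : Measure ℝ) (lam : ℝ) : ℝ :=
  laplaceExp ν lam - lam * deriv (laplaceExp ν) lam

/-- `σ(t,s) = (φ')⁻¹(s/t)` if `s/t < φ'(0+)`, and `σ(t,s) = 0` otherwise. -/
def IsSigmaFun (ν : Measure ℝ) (σ : ℝ → ℝ → ℝ) : Prop :=
  ∀ t s : ℝ, 0 < t → 0 < s →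
    ((∃ lam : ℝ, 0 < lam ∧ s / t < deriv (laplaceExp ν) lam) →
      0 < σ t s ∧ deriv (laplaceExp ν) (σ t s) = s / t) ∧
    ((∀ lam : ℝ, 0 < lam → deriv (laplaceExp ν) lam ≤ s / t) → σ t s = 0)

/-- `φInv` is the inverse of the Laplace exponent `φ` on `(0,∞)`. -/
def IsPhiInv (ν : Measure ℝ) (φInv : ℝ → ℝ) : Prop :=
  ∀ u : ℝ, 0 < u → 0 < φInv u ∧ laplaceExp ν (φInv u) = u

/-- `HInv` is the inverse of `H` on `(0,∞)`. -/
def IsHInv (ν : Measure ℝ) (HInv : ℝ → ℝ) : Prop :=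
  ∀ u : ℝ, 0 < u → 0 < HInv u ∧ Hfun ν (HInv u) = u

/-!
The map `σ(t, ·)` inverts `φ'`, so the claim is a lower scaling bound for `(φ')⁻¹`. It follows from
a doubling property `φ'(λ) ≤ 2 φ'(θλ)` for `λ ≥ a`, with some `θ > 1`: iterating gives
`φ'(λ) ≤ 2ⁿ φ'(θⁿλ)`, so `φ'(λ)/φ'(Λ) ≥ 2ⁿ` forces `Λ ≥ θⁿλ`, and `δ = log₂ θ`.
Doubling comes from `φ'(λ) - φ'(θλ) ≤ 2(θ - 1)e⁻¹ φ'(λ/2)` together with a halving bound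
`φ'(λ/2) ≤ M φ'(λ)`. Halving is where (Poly-R₁) enters: for `1/λ < R₁` the lower scaling of `w`
gives `w(1/λ) ≤ w(1/(Kλ)) - w(1/λ)`, a mass near `1/λ` that `φ'(λ)` sees, which controls the part
of `φ'(λ/2)` beyond `1/λ`. Monotonicity of `φ'` extends halving to all `λ ≥ a`; under (Poly-∞) it
holds for all `λ > 0`, so the doubling can be started at `λ = σ(t, s)` itself.
-/

noncomputable def laplaceExpDeriv (ν : Measure ℝ) (lam : ℝ) : ℝ :=
  ∫ s, s * exp (-(lam * s)) ∂ν

lemma mul_exp_neg_mul_le {lam : ℝ} (hlam : 0 < lam) (s : ℝ) :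
    s * exp (-(lam * s)) ≤ exp (-1) / lam := by
  rw [le_div_iff₀ hlam]
  linarith [mul_exp_neg_le_exp_neg_one (lam * s)]

lemma exists_pos_forall_le_ofReal_inv_lt {R₁ : ℝ≥0∞} (hR₁ : 0 < R₁) :
    ∃ b : ℝ, 0 < b ∧ ∀ x, b ≤ x → ENNReal.ofReal x⁻¹ < R₁ := by
  obtain ⟨r, -, hr, hrR₁⟩ := ENNReal.lt_iff_exists_real_btwn.1 hR₁
  have hr0 : 0 < r := ENNReal.ofReal_pos.1 hr
  exact ⟨r⁻¹, inv_pos.2 hr0, fun x hx =>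
    (ENNReal.ofReal_le_ofReal (inv_le_of_inv_le₀ hr0 hx)).trans_lt hrR₁⟩

namespace IsLevyMeasure

variable {ν : Measure ℝ}

lemma ae_pos (hν : IsLevyMeasure ν) : ∀ᵐ s ∂ν, 0 < s :=
  ae_iff.2 (measure_mono_null (fun _ hs => not_lt.1 hs) hν.supp)

lemma integrable_of_norm_le (hν : IsLevyMeasure ν) {g : ℝ → ℝ} (hg : Continuous g)
    (C₁ C₂ : ℝ) (h₁ : ∀ s ∈ Ioc 0 1, ‖g s‖ ≤ C₁ * s) (h₂ : ∀ s ∈ Ioi 1, ‖g s‖ ≤ C₂) :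
    Integrable g ν := by
  have h₀ : IntegrableOn g (Iic 0) ν := by
    rw [IntegrableOn, Measure.restrict_eq_zero.2 hν.supp]
    exact integrable_zero_measure
  have hnear : IntegrableOn g (Ioc 0 1) ν :=
    Integrable.mono' (hν.integ.const_mul C₁) hg.aestronglyMeasurable
      (ae_restrict_of_forall_mem measurableSet_Ioc h₁)
  have hfar : IntegrableOn g (Ioi 1) ν :=
    Integrable.mono' (integrableOn_const (hν.tail_fin 1 one_pos).ne) hg.aestronglyMeasurable
      (ae_restrict_of_forall_mem measurableSet_Ioi h₂)
  rw [← integrableOn_univ, ← Iic_union_Ioi (a := 1), ← Iic_union_Ioc_eq_Iic zero_le_one]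
  exact (h₀.union hnear).union hfar

lemma integrable_mul_exp_neg (hν : IsLevyMeasure ν) {lam : ℝ} (hlam : 0 < lam) :
    Integrable (fun s => s * exp (-(lam * s))) ν := by
  refine hν.integrable_of_norm_le (by fun_prop) 1 (exp (-1) / lam) (fun s hs => ?_) (fun s hs => ?_)
  · rw [norm_of_nonneg (by have := hs.1.le; positivity), one_mul]
    exact mul_le_of_le_one_right hs.1.le (exp_le_one_iff.2 (by nlinarith [hs.1]))
  · rw [norm_of_nonneg (by have : (0 : ℝ) ≤ s := zero_le_one.trans (mem_Ioi.1 hs).le; positivity)]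
    exact mul_exp_neg_mul_le hlam s

lemma integrable_one_sub_exp_neg (hν : IsLevyMeasure ν) {lam : ℝ} (hlam : 0 < lam) :
    Integrable (fun s => 1 - exp (-(lam * s))) ν := by
  have hbound : ∀ s, 0 ≤ s → 0 ≤ 1 - exp (-(lam * s)) ∧ 1 - exp (-(lam * s)) ≤ lam * s := by
    intro s hs
    exact ⟨sub_nonneg.2 (exp_le_one_iff.2 (by nlinarith)),
      by linarith [add_one_le_exp (-(lam * s))]⟩
  refine hν.integrable_of_norm_le (by fun_prop) lam 1 (fun s hs => ?_) (fun s hs => ?_)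
  · obtain ⟨h₀, h₁⟩ := hbound s hs.1.le
    rwa [norm_of_nonneg h₀]
  · rw [norm_of_nonneg (hbound s (zero_le_one.trans (mem_Ioi.1 hs).le)).1]
    linarith [exp_pos (-(lam * s))]

lemma hasDerivAt_laplaceExp (hν : IsLevyMeasure ν) {lam : ℝ} (hlam : 0 < lam) :
    HasDerivAt (laplaceExp ν) (laplaceExpDeriv ν lam) lam := by
  refine (hasDerivAt_integral_of_dominated_loc_of_deriv_le (F := fun x s => 1 - exp (-(x * s)))
    (F' := fun x s => s * exp (-(x * s))) (Metric.ball_mem_nhds lam (half_pos hlam))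
    (.of_forall fun _ => (by fun_prop : Continuous _).aestronglyMeasurable)
    (hν.integrable_one_sub_exp_neg hlam) (by fun_prop : Continuous _).aestronglyMeasurable ?_
    (hν.integrable_mul_exp_neg (half_pos hlam)) ?_).2
  · filter_upwards [hν.ae_pos] with s hs x hx
    have hx : lam / 2 < x := by
      linarith [(abs_lt.1 (Metric.mem_ball.1 hx : |x - lam| < lam / 2)).1]
    rw [norm_of_nonneg (by positivity)]
    gcongr
  · refine .of_forall fun s x _ => ?_
    have h := (((hasDerivAt_id x).mul_const s).neg.exp.const_sub 1)
    simp only [id, one_mul, mul_neg, neg_neg] at h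
    rwa [mul_comm] at h

lemma deriv_laplaceExp (hν : IsLevyMeasure ν) {lam : ℝ} (hlam : 0 < lam) :
    deriv (laplaceExp ν) lam = laplaceExpDeriv ν lam :=
  (hν.hasDerivAt_laplaceExp hlam).deriv

lemma integral_pos (hν : IsLevyMeasure ν) (hmass : 0 < ν (Ioi 0)) {g : ℝ → ℝ}
    (hint : Integrable g ν) (hg : ∀ s, 0 < s → 0 < g s) : 0 < ∫ s, g s ∂ν := by
  rw [integral_pos_iff_support_of_nonneg_ae (hν.ae_pos.mono fun s hs => (hg s hs).le) hint]
  exact hmass.trans_le (measure_mono fun s hs => (hg s hs).ne')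

lemma laplaceExpDeriv_pos (hν : IsLevyMeasure ν) (hmass : 0 < ν (Ioi 0)) {lam : ℝ}
    (hlam : 0 < lam) : 0 < laplaceExpDeriv ν lam :=
  hν.integral_pos hmass (hν.integrable_mul_exp_neg hlam) fun s hs => by positivity

lemma strictAntiOn_laplaceExpDeriv (hν : IsLevyMeasure ν) (hmass : 0 < ν (Ioi 0)) :
    StrictAntiOn (laplaceExpDeriv ν) (Ioi 0) := by
  intro x hx y hy hxy
  have hix := hν.integrable_mul_exp_neg hx
  have hiy := hν.integrable_mul_exp_neg hy
  have hdiff := hν.integral_pos (g := fun s => s * exp (-(x * s)) - s * exp (-(y * s))) hmass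
    (hix.sub hiy) fun s hs => sub_pos.2 (mul_lt_mul_of_pos_left (exp_lt_exp.2 (by nlinarith)) hs)
  rw [integral_sub hix hiy] at hdiff
  exact sub_pos.1 hdiff

lemma measureReal_Ioc (hν : IsLevyMeasure ν) {r R : ℝ} (hr : 0 < r) (hrR : r ≤ R) :
    ν.real (Ioc r R) = levyTail ν r - levyTail ν R := by
  rw [← Ioi_sdiff_Ioi,
    measureReal_sdiff (Ioi_subset_Ioi hrR) measurableSet_Ioi (hν.tail_fin r hr).ne]
  rfl

lemma mul_levyTail_sub_le (hν : IsLevyMeasure ν) {lam r R : ℝ} (hlam : 0 < lam) (hr : 0 < r)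
    (hrR : r ≤ R) :
    r * exp (-(lam * R)) * (levyTail ν r - levyTail ν R) ≤ laplaceExpDeriv ν lam := by
  have hint := hν.integrable_mul_exp_neg hlam
  have hfin : ν (Ioc r R) ≠ ⊤ :=
    ((measure_mono Ioc_subset_Ioi_self).trans_lt (hν.tail_fin r hr)).ne
  calc r * exp (-(lam * R)) * (levyTail ν r - levyTail ν R)
      = ∫ _ in Ioc r R, r * exp (-(lam * R)) ∂ν := by
        rw [setIntegral_const, smul_eq_mul, hν.measureReal_Ioc hr hrR, mul_comm]
    _ ≤ ∫ s in Ioc r R, s * exp (-(lam * s)) ∂ν :=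
        setIntegral_mono_on (integrableOn_const hfin) hint.integrableOn measurableSet_Ioc
          fun s hs => mul_le_mul hs.1.le (exp_le_exp.2 (by nlinarith [hs.2])) (by positivity)
            (hr.trans hs.1).le
    _ ≤ laplaceExpDeriv ν lam :=
        setIntegral_le_integral hint (hν.ae_pos.mono fun s hs => by positivity)

lemma laplaceExpDeriv_eq_add (hν : IsLevyMeasure ν) {lam η : ℝ} (hlam : 0 < lam) (hη : 0 ≤ η) :
    laplaceExpDeriv ν lam = (∫ s in Ioc 0 η, s * exp (-(lam * s)) ∂ν)
      + ∫ s in Ioi η, s * exp (-(lam * s)) ∂ν := by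
  have hint := hν.integrable_mul_exp_neg hlam
  rw [← setIntegral_union (Ioc_disjoint_Ioi le_rfl) measurableSet_Ioi hint.integrableOn
    hint.integrableOn, Ioc_union_Ioi_eq_Ioi hη,
    Measure.restrict_eq_self_of_ae_mem (s := Ioi 0) hν.ae_pos]
  rfl

lemma setIntegral_Ioc_le (hν : IsLevyMeasure ν) {lam η : ℝ} (hlam : 0 < lam) :
    ∫ s in Ioc 0 η, s * exp (-(lam / 2 * s)) ∂ν ≤ exp (lam * η / 2) * laplaceExpDeriv ν lam := by
  have hint := hν.integrable_mul_exp_neg hlam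
  calc ∫ s in Ioc 0 η, s * exp (-(lam / 2 * s)) ∂ν
      ≤ ∫ s in Ioc 0 η, exp (lam * η / 2) * (s * exp (-(lam * s))) ∂ν := by
        refine setIntegral_mono_on (hν.integrable_mul_exp_neg (half_pos hlam)).integrableOn
          (hint.const_mul _).integrableOn measurableSet_Ioc fun s hs => ?_
        rw [mul_left_comm, ← exp_add]
        exact mul_le_mul_of_nonneg_left (exp_le_exp.2 (by nlinarith [hs.2])) hs.1.le
    _ = exp (lam * η / 2) * ∫ s in Ioc 0 η, s * exp (-(lam * s)) ∂ν := integral_const_mul _ _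
    _ ≤ exp (lam * η / 2) * laplaceExpDeriv ν lam := by
        gcongr
        exact setIntegral_le_integral hint (hν.ae_pos.mono fun s hs => by positivity)

lemma setIntegral_Ioi_le (hν : IsLevyMeasure ν) {lam η : ℝ} (hlam : 0 < lam) (hη : 0 < η) :
    ∫ s in Ioi η, s * exp (-(lam * s)) ∂ν ≤ exp (-1) / lam * levyTail ν η := by
  calc ∫ s in Ioi η, s * exp (-(lam * s)) ∂ν ≤ ∫ _ in Ioi η, exp (-1) / lam ∂ν :=
        setIntegral_mono_on (hν.integrable_mul_exp_neg hlam).integrableOn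
          (integrableOn_const (hν.tail_fin η hη).ne) measurableSet_Ioi
          fun s _ => mul_exp_neg_mul_le hlam s
    _ = exp (-1) / lam * levyTail ν η := by rw [setIntegral_const, smul_eq_mul, mul_comm]; rfl

lemma laplaceExpDeriv_half_le (hν : IsLevyMeasure ν) {lam K : ℝ} (hlam : 0 < lam) (hK : 1 ≤ K)
    (hw : 2 * levyTail ν lam⁻¹ ≤ levyTail ν (lam⁻¹ / K)) :
    laplaceExpDeriv ν (lam / 2) ≤ (exp (1 / 2) + 2 * K) * laplaceExpDeriv ν lam := by
  have hη : 0 < lam⁻¹ := inv_pos.2 hlam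
  have hK0 : 0 < K := zero_lt_one.trans_le hK
  have hnear := hν.setIntegral_Ioc_le (η := lam⁻¹) hlam
  rw [mul_inv_cancel₀ hlam.ne'] at hnear
  -- by `hw` the tail beyond `1/lam` is at most the mass of `(1/(K lam), 1/lam]`, seen by `φ'(lam)`
  have hmid := hν.mul_levyTail_sub_le hlam (div_pos hη hK0) (div_le_self hη.le hK)
  rw [mul_inv_cancel₀ hlam.ne'] at hmid
  have hfar : ∫ s in Ioi lam⁻¹, s * exp (-(lam / 2 * s)) ∂ν ≤ 2 * K * laplaceExpDeriv ν lam :=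
    calc ∫ s in Ioi lam⁻¹, s * exp (-(lam / 2 * s)) ∂ν
        ≤ exp (-1) / (lam / 2) * levyTail ν lam⁻¹ := hν.setIntegral_Ioi_le (half_pos hlam) hη
      _ = 2 * K * (lam⁻¹ / K * exp (-1) * levyTail ν lam⁻¹) := by field_simp
      _ ≤ 2 * K * (lam⁻¹ / K * exp (-1) * (levyTail ν (lam⁻¹ / K) - levyTail ν lam⁻¹)) := by
          gcongr; linarith
      _ ≤ 2 * K * laplaceExpDeriv ν lam := by gcongr
  rw [hν.laplaceExpDeriv_eq_add (half_pos hlam) hη.le, add_mul]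
  exact add_le_add hnear hfar

lemma mul_exp_neg_sub_le {lam θ s : ℝ} (hθ : 1 ≤ θ) (hs : 0 ≤ s) :
    s * exp (-(lam * s)) - s * exp (-(θ * lam * s))
      ≤ 2 * (θ - 1) * exp (-1) * (s * exp (-(lam / 2 * s))) := by
  set E := exp (-(lam / 2 * s))
  set F := exp (-((θ - 1) * lam * s))
  have hE : exp (-(lam * s)) = E * E := by rw [← exp_add]; congr 1; ring
  have hF : exp (-(θ * lam * s)) = E * E * F := by rw [← exp_add, ← exp_add]; congr 1; ring
  have h1F : 1 - F ≤ (θ - 1) * lam * s := by linarith [add_one_le_exp (-((θ - 1) * lam * s))]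
  have hlamE : lam * s * E ≤ 2 * exp (-1) := by
    linarith [mul_exp_neg_le_exp_neg_one (lam / 2 * s)]
  have hθ1 : 0 ≤ θ - 1 := sub_nonneg.2 hθ
  rw [hE, hF]
  calc s * (E * E) - s * (E * E * F) = s * E * E * (1 - F) := by ring
    _ ≤ s * E * E * ((θ - 1) * lam * s) := by gcongr
    _ = (θ - 1) * (lam * s * E) * (s * E) := by ring
    _ ≤ (θ - 1) * (2 * exp (-1)) * (s * E) := by gcongr
    _ = 2 * (θ - 1) * exp (-1) * (s * E) := by ring

lemma laplaceExpDeriv_sub_le (hν : IsLevyMeasure ν) {lam θ : ℝ} (hlam : 0 < lam) (hθ : 1 ≤ θ) :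
    laplaceExpDeriv ν lam - laplaceExpDeriv ν (θ * lam)
      ≤ 2 * (θ - 1) * exp (-1) * laplaceExpDeriv ν (lam / 2) := by
  have hθlam : 0 < θ * lam := mul_pos (zero_lt_one.trans_le hθ) hlam
  rw [laplaceExpDeriv, laplaceExpDeriv, laplaceExpDeriv, ← integral_const_mul,
    ← integral_sub (hν.integrable_mul_exp_neg hlam) (hν.integrable_mul_exp_neg hθlam)]
  exact integral_mono_ae ((hν.integrable_mul_exp_neg hlam).sub (hν.integrable_mul_exp_neg hθlam))
    ((hν.integrable_mul_exp_neg (half_pos hlam)).const_mul _)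
    (hν.ae_pos.mono fun s hs => mul_exp_neg_sub_le hθ hs.le)

end IsLevyMeasure

-- chosen so that `2 (θ - 1) e⁻¹ M = 1/2` in `laplaceExpDeriv_sub_le`
noncomputable def doublingFactor (M : ℝ) : ℝ := 1 + exp 1 / (4 * M)

lemma one_lt_doublingFactor {M : ℝ} (hM : 0 < M) : 1 < doublingFactor M :=
  lt_add_of_pos_right 1 (by positivity)

lemma IsLevyMeasure.laplaceExpDeriv_le_two_mul {ν : Measure ℝ} (hν : IsLevyMeasure ν)
    {lam M : ℝ} (hlam : 0 < lam) (hM : 0 < M)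
    (hhalf : laplaceExpDeriv ν (lam / 2) ≤ M * laplaceExpDeriv ν lam) :
    laplaceExpDeriv ν lam ≤ 2 * laplaceExpDeriv ν (doublingFactor M * lam) := by
  have hcoef : 2 * (doublingFactor M - 1) * exp (-1) * M = 1 / 2 := by
    rw [doublingFactor, exp_neg]
    field_simp
    ring
  have hsub := hν.laplaceExpDeriv_sub_le hlam (one_lt_doublingFactor hM).le
  have hcoef0 : 0 ≤ 2 * (doublingFactor M - 1) * exp (-1) := by
    have := one_lt_doublingFactor hM
    positivity
  have hhalf' : 2 * (doublingFactor M - 1) * exp (-1) * laplaceExpDeriv ν (lam / 2)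
      ≤ laplaceExpDeriv ν lam / 2 :=
    calc _ ≤ 2 * (doublingFactor M - 1) * exp (-1) * (M * laplaceExpDeriv ν lam) := by gcongr
      _ = laplaceExpDeriv ν lam / 2 := by rw [← mul_assoc, hcoef]; ring
  linarith

lemma PolyCond.two_mul_levyTail_le {ν : Measure ℝ} {R₁ : ℝ≥0∞} {c c' β₁ β₂ : ℝ}
    (hpoly : PolyCond ν R₁ c c' β₁ β₂) {K η : ℝ} (hK : 2 ≤ c * K ^ β₁) (hK1 : 1 ≤ K)
    (hη : 0 < η) (hηR₁ : ENNReal.ofReal η < R₁) :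
    2 * levyTail ν η ≤ levyTail ν (η / K) := by
  have hratio := (hpoly (η / K) η (div_pos hη (zero_lt_one.trans_le hK1))
    (div_le_self hη.le hK1) hηR₁).1
  rw [div_div_cancel₀ hη.ne'] at hratio
  rcases (show 0 ≤ levyTail ν η from ENNReal.toReal_nonneg).eq_or_lt with h | h
  · rw [← h, mul_zero]
    exact ENNReal.toReal_nonneg
  · rw [le_div_iff₀ h] at hratio
    nlinarith

lemma PolyCond.measure_Ioi_pos {ν : Measure ℝ} {R₁ : ℝ≥0∞} {c c' β₁ β₂ : ℝ}
    (hpoly : PolyCond ν R₁ c c' β₁ β₂) (hR₁ : 0 < R₁) (hc : 0 < c) : 0 < ν (Ioi 0) := by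
  obtain ⟨b, hb, hbR₁⟩ := exists_pos_forall_le_ofReal_inv_lt hR₁
  have hR := inv_pos.2 hb
  have h := (hpoly b⁻¹ b⁻¹ hR le_rfl (hbR₁ b le_rfl)).1
  rw [div_self hR.ne', one_rpow, mul_one] at h
  refine pos_iff_ne_zero.2 fun h0 => ?_
  have hw : levyTail ν b⁻¹ = 0 := by
    simp [levyTail, measure_mono_null (Ioi_subset_Ioi hR.le) h0]
  rw [hw, div_zero] at h
  linarith

lemma PolyCond.exists_laplaceExpDeriv_half_le {ν : Measure ℝ} {R₁ : ℝ≥0∞} {c c' β₁ β₂ : ℝ}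
    (hpoly : PolyCond ν R₁ c c' β₁ β₂) (hν : IsLevyMeasure ν) (hc : 0 < c) (hβ₁ : 0 < β₁) :
    ∃ M, 0 < M ∧ ∀ lam, 0 < lam → ENNReal.ofReal lam⁻¹ < R₁ →
      laplaceExpDeriv ν (lam / 2) ≤ M * laplaceExpDeriv ν lam := by
  obtain ⟨K, hK, hK1⟩ := ((((tendsto_rpow_atTop hβ₁).const_mul_atTop hc).eventually_ge_atTop 2).and
    (Filter.eventually_ge_atTop 1)).exists
  exact ⟨exp (1 / 2) + 2 * K, by positivity, fun lam hlam hR₁ =>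
    hν.laplaceExpDeriv_half_le hlam hK1 (hpoly.two_mul_levyTail_le hK hK1 (inv_pos.2 hlam) hR₁)⟩

lemma exists_half_le_mul_of_ge {ψ : ℝ → ℝ} (hψ : AntitoneOn ψ (Ioi 0))
    (hpos : ∀ x, 0 < x → 0 < ψ x) {a b M : ℝ} (ha : 0 < a) (hb : 0 < b)
    (hhalf : ∀ x, b ≤ x → ψ (x / 2) ≤ M * ψ x) :
    ∃ M', 0 < M' ∧ ∀ x, a ≤ x → ψ (x / 2) ≤ M' * ψ x := by
  set M₁ := ψ (a / 2) / ψ b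
  have hM₁ : 0 < M₁ := div_pos (hpos _ (half_pos ha)) (hpos _ hb)
  refine ⟨max M M₁, lt_max_of_lt_right hM₁, fun x hx => ?_⟩
  have hx0 := ha.trans_le hx
  have hψx := (hpos x hx0).le
  rcases le_or_gt b x with hbx | hxb
  · exact (hhalf x hbx).trans (mul_le_mul_of_nonneg_right (le_max_left _ _) hψx)
  · calc ψ (x / 2) ≤ ψ (a / 2) := hψ (half_pos ha) (half_pos hx0) (by linarith)
      _ = M₁ * ψ b := (div_mul_cancel₀ _ (hpos b hb).ne').symm
      _ ≤ M₁ * ψ x := mul_le_mul_of_nonneg_left (hψ hx0 hb hxb.le) hM₁.le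
      _ ≤ max M M₁ * ψ x := mul_le_mul_of_nonneg_right (le_max_right _ _) hψx

lemma le_two_pow_mul_of_doubling {ψ : ℝ → ℝ} {θ a : ℝ} (hθ : 1 ≤ θ) (ha : 0 ≤ a)
    (hdouble : ∀ x, a ≤ x → ψ x ≤ 2 * ψ (θ * x)) (n : ℕ) {x : ℝ} (hx : a ≤ x) :
    ψ x ≤ 2 ^ n * ψ (θ ^ n * x) := by
  induction n with
  | zero => simp
  | succ n ih =>
    have hθx : a ≤ θ ^ n * x := hx.trans (le_mul_of_one_le_left (ha.trans hx) (one_le_pow₀ hθ))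
    calc ψ x ≤ 2 ^ n * ψ (θ ^ n * x) := ih
      _ ≤ 2 ^ n * (2 * ψ (θ * (θ ^ n * x))) := by gcongr; exact hdouble _ hθx
      _ = 2 ^ (n + 1) * ψ (θ ^ (n + 1) * x) := by ring_nf

lemma rpow_logb_mul_le_of_doubling {ψ : ℝ → ℝ} (hψ : StrictAntiOn ψ (Ioi 0)) {θ a : ℝ}
    (hθ : 1 < θ) (ha : 0 < a) (hdouble : ∀ x, a ≤ x → ψ x ≤ 2 * ψ (θ * x)) {x y : ℝ}
    (hx : a ≤ x) (hy : 0 < y) (hψy : 0 < ψ y) (hψyx : ψ y ≤ ψ x) :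
    2 ^ (-logb 2 θ) * (ψ x / ψ y) ^ logb 2 θ ≤ y / x := by
  have hx0 := ha.trans_le hx
  set r := ψ x / ψ y
  have hr : 1 ≤ r := (one_le_div hψy).2 hψyx
  have hδ : 0 < logb 2 θ := logb_pos one_lt_two hθ
  obtain ⟨n, hn, hn'⟩ := exists_nat_pow_near hr one_lt_two
  have hθnx : θ ^ n * x ≤ y := by
    by_contra! hlt
    have h := hψ hy (mem_Ioi.2 (hy.trans hlt)) hlt
    have := le_two_pow_mul_of_doubling hθ.le ha.le hdouble n hx
    rw [le_div_iff₀ hψy] at hn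
    nlinarith [pow_pos (zero_lt_two : (0 : ℝ) < 2) n]
  calc 2 ^ (-logb 2 θ) * r ^ logb 2 θ = (r / 2) ^ logb 2 θ := by
        rw [rpow_neg zero_le_two, div_rpow (by linarith) zero_le_two]
        ring
    _ ≤ ((2 : ℝ) ^ n) ^ logb 2 θ :=
        rpow_le_rpow (by linarith) (by rw [div_le_iff₀ zero_lt_two, ← pow_succ]; exact hn'.le) hδ.le
    _ = θ ^ n := by
        rw [← rpow_natCast, ← rpow_mul zero_le_two, mul_comm, rpow_mul zero_le_two,
          rpow_logb two_pos (by norm_num) (zero_lt_one.trans hθ), rpow_natCast]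
    _ ≤ y / x := (le_div_iff₀ hx0).2 hθnx

namespace IsSigmaFun

variable {ν : Measure ℝ} {σ : ℝ → ℝ → ℝ}

lemma laplaceExpDeriv_eq (hσ : IsSigmaFun ν σ) (hν : IsLevyMeasure ν) {t s lam : ℝ} (ht : 0 < t)
    (hs : 0 < s) (hlam : 0 < lam) (hslam : s / t < laplaceExpDeriv ν lam) :
    0 < σ t s ∧ laplaceExpDeriv ν (σ t s) = s / t := by
  obtain ⟨hpos, heq⟩ := (hσ t s ht hs).1 ⟨lam, hlam, by rwa [hν.deriv_laplaceExp hlam]⟩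
  exact ⟨hpos, by rwa [← hν.deriv_laplaceExp hpos]⟩

lemma scaling_of_doubling (hσ : IsSigmaFun ν σ) (hν : IsLevyMeasure ν)
    (hψ : StrictAntiOn (laplaceExpDeriv ν) (Ioi 0)) {θ a : ℝ} (hθ : 1 < θ) (ha : 0 < a)
    (hdouble : ∀ x, a ≤ x → laplaceExpDeriv ν x ≤ 2 * laplaceExpDeriv ν (θ * x))
    {t u s : ℝ} (ht : 0 < t) (hu : 0 < u) (hus : u ≤ s) (hsa : s / t ≤ laplaceExpDeriv ν a) :
    2 ^ (-logb 2 θ) * (s / u) ^ logb 2 θ ≤ σ t u / σ t s := by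
  have hsa' : s / t < laplaceExpDeriv ν (a / 2) :=
    hsa.trans_lt (hψ (half_pos ha) ha (half_lt_self ha))
  have hut : u / t ≤ s / t := by gcongr
  obtain ⟨hσs, hψs⟩ := hσ.laplaceExpDeriv_eq hν ht (hu.trans_le hus) (half_pos ha) hsa'
  obtain ⟨hσu, hψu⟩ := hσ.laplaceExpDeriv_eq hν ht hu (half_pos ha) (hut.trans_lt hsa')
  have has : a ≤ σ t s := (hψ.le_iff_ge hσs ha).1 (hψs ▸ hsa)
  have h := rpow_logb_mul_le_of_doubling hψ hθ ha hdouble has hσu (hψu ▸ div_pos hu ht)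
    (by rw [hψu, hψs]; exact hut)
  rwa [hψs, hψu, div_div_div_cancel_right₀ ht.ne'] at h

end IsSigmaFun

theorem sigma_scaling_general
    (ν : Measure ℝ) (hν : IsLevyMeasure ν)
    (σ : ℝ → ℝ → ℝ) (hσ : IsSigmaFun ν σ)
    (R₁ : ℝ≥0∞) (c c' β₁ β₂ : ℝ)
    (hR₁ : 0 < R₁) (hc : 0 < c) (hβ₁ : 0 < β₁)
    (hpoly : PolyCond ν R₁ c c' β₁ β₂) :
    (∀ a : ℝ, 0 < a → ∃ δ : ℝ, 0 < δ ∧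
      ∀ t u s : ℝ, 0 < t → 0 < u → u ≤ s → s ≤ t * deriv (laplaceExp ν) a →
        (2:ℝ) ^ (-δ) * (s / u) ^ δ ≤ σ t u / σ t s) ∧
    (R₁ = ⊤ → ∃ δ : ℝ, 0 < δ ∧
      ∀ t u s : ℝ, 0 < t → 0 < u → u ≤ s →
        (∃ lam : ℝ, 0 < lam ∧ s < t * deriv (laplaceExp ν) lam) →
        (2:ℝ) ^ (-δ) * (s / u) ^ δ ≤ σ t u / σ t s) := by
  have hmass := hpoly.measure_Ioi_pos hR₁ hc
  have hψ := hν.strictAntiOn_laplaceExpDeriv hmass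
  obtain ⟨M, hM, hhalf⟩ := hpoly.exists_laplaceExpDeriv_half_le hν hc hβ₁
  refine ⟨fun a ha => ?_, fun hR₁top => ?_⟩
  · obtain ⟨b, hb, hbR₁⟩ := exists_pos_forall_le_ofReal_inv_lt hR₁
    obtain ⟨Ma, hMa, hhalfa⟩ := exists_half_le_mul_of_ge hψ.antitoneOn
      (fun x hx => hν.laplaceExpDeriv_pos hmass hx) ha hb
      (fun x hx => hhalf x (hb.trans_le hx) (hbR₁ x hx))
    refine ⟨logb 2 (doublingFactor Ma), logb_pos one_lt_two (one_lt_doublingFactor hMa),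
      fun t u s ht hu hus hsa => ?_⟩
    rw [hν.deriv_laplaceExp ha, ← div_le_iff₀' ht] at hsa
    exact hσ.scaling_of_doubling hν hψ (one_lt_doublingFactor hMa) ha
      (fun x hx => hν.laplaceExpDeriv_le_two_mul (ha.trans_le hx) hMa (hhalfa x hx)) ht hu hus hsa
  · refine ⟨logb 2 (doublingFactor M), logb_pos one_lt_two (one_lt_doublingFactor hM),
      fun t u s ht hu hus ⟨lam, hlam, hs⟩ => ?_⟩
    rw [hν.deriv_laplaceExp hlam, ← div_lt_iff₀' ht] at hs
    obtain ⟨hσs, hψs⟩ := hσ.laplaceExpDeriv_eq hν ht (hu.trans_le hus) hlam hs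
    exact hσ.scaling_of_doubling hν hψ (one_lt_doublingFactor hM) hσs
      (fun x hx => hν.laplaceExpDeriv_le_two_mul (hσs.trans_le hx) hM
        (hhalf x (hσs.trans_le hx) (hR₁top ▸ ENNReal.ofReal_lt_top))) ht hu hus hψs.ge

/-- Lemma 2.4: under (Poly-R₁), for any `a > 0` there is `δ = δ(a) > 0` such that
`σ(t,u)/σ(t,s) ≥ 2^{-δ} (s/u)^δ` for all `0 < u ≤ s ≤ t φ'(a)`; under (Poly-∞) the
inequality holds for all `0 < u ≤ s < t φ'(0+)`. -/
theorem sigma_scaling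
    (ν : Measure ℝ) (hν : IsLevyMeasure ν)
    (σ : ℝ → ℝ → ℝ) (hσ : IsSigmaFun ν σ)
    (R₁ : ℝ≥0∞) (c c' β₁ β₂ : ℝ)
    (hR₁ : 0 < R₁) (hc : 0 < c) (hc' : 0 < c') (hβ₁ : 0 < β₁) (hβ : β₁ ≤ β₂)
    (hpoly : PolyCond ν R₁ c c' β₁ β₂) :
    (∀ a : ℝ, 0 < a → ∃ δ : ℝ, 0 < δ ∧
      ∀ t u s : ℝ, 0 < t → 0 < u → u ≤ s → s ≤ t * deriv (laplaceExp ν) a →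
        (2:ℝ) ^ (-δ) * (s / u) ^ δ ≤ σ t u / σ t s) ∧
    (R₁ = ⊤ → ∃ δ : ℝ, 0 < δ ∧
      ∀ t u s : ℝ, 0 < t → 0 < u → u ≤ s →
        (∃ lam : ℝ, 0 < lam ∧ s < t * deriv (laplaceExp ν) lam) →
        (2:ℝ) ^ (-δ) * (s / u) ^ δ ≤ σ t u / σ t s) :=
  sigma_scaling_general ν hν σ hσ R₁ c c' β₁ β₂ hR₁ hc hβ₁ hpoly
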